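/- arXiv:2012.12851 — 3 statements merged into one kernel-verified Lean document; each statement's English description precedes it below -/
import Mathlib

section
/- For real constants A, B with A ≠ 0 and B ≠ 0, the radius of convergence of the power series u(w) = Σ_{n≥0} c_n A^{n+1} B^n w^{2n+1} equals 1/(2√(|A·B|)), where c_n is the n-th Catalan number. -/
/-!
The coefficients vanish in even degree and `a (2n+1) = A c_n (AB)^n`, so the series is
`A w C(AB w²)` with `C(z) = ∑ c_n z^n`. Substituting `w²` for `z` squares the radius, and the
ratio test gives `1 / (4|AB|)` for the radius in `z`, since `c_{n+1} / c_n = 2(2n+1)/(n+2) → 4`.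
-/

open Filter Topology NNReal ENNReal FormalMultilinearSeries

theorem catalan_pos (n : ℕ) : 0 < catalan n :=
  Nat.pos_of_mul_pos_left ((succ_mul_catalan_eq_centralBinom n).symm ▸ n.centralBinom_pos)

theorem add_two_mul_catalan_succ (n : ℕ) :
    (n + 2) * catalan (n + 1) = 2 * (2 * n + 1) * catalan n := by
  have h := Nat.succ_mul_centralBinom_succ n
  rw [← succ_mul_catalan_eq_centralBinom, ← succ_mul_catalan_eq_centralBinom] at h
  exact Nat.eq_of_mul_eq_mul_left n.succ_pos (by linarith)

theorem tendsto_catalan_succ_div_catalan :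
    Tendsto (fun n ↦ (catalan (n + 1) : ℝ) / catalan n) atTop (𝓝 4) := by
  have hratio (n : ℕ) : (catalan (n + 1) : ℝ) / catalan n = 4 - 6 / ((n : ℝ) + 2) := by
    have h : ((n : ℝ) + 2) * catalan (n + 1) = 2 * (2 * n + 1) * catalan n := by
      exact_mod_cast add_two_mul_catalan_succ n
    have := catalan_pos n
    field_simp
    linarith
  have h6 : Tendsto (fun n : ℕ ↦ 6 / ((n : ℝ) + 2)) atTop (𝓝 0) :=
    tendsto_const_nhds.div_atTop (tendsto_atTop_add_const_right _ _ tendsto_natCast_atTop_atTop)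
  simpa [hratio] using tendsto_const_nhds.sub h6

theorem radius_ofScalars_mul_catalan_mul_pow {𝕜 : Type*} [RCLike 𝕜] (E : Type*) [NormedRing E]
    [NormedAlgebra 𝕜 E] [NormOneClass E] {y x : 𝕜} (hy : y ≠ 0) (hx : x ≠ 0) :
    (ofScalars E fun n ↦ y * catalan n * x ^ n).radius = ((4 * ‖x‖₊)⁻¹ : ℝ≥0) := by
  refine ofScalars_radius_eq_inv_of_tendsto E _
    (mul_ne_zero four_ne_zero (nnnorm_ne_zero_iff.mpr hx)) ?_
  have hratio (n : ℕ) : ‖y * catalan (n + 1) * x ^ (n + 1)‖ / ‖y * catalan n * x ^ n‖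
      = (catalan (n + 1) : ℝ) / catalan n * ‖x‖ := by
    have := catalan_pos n
    simp only [norm_mul, norm_pow, RCLike.norm_natCast]
    field_simp
    ring
  convert tendsto_catalan_succ_div_catalan.mul_const ‖x‖ using 1
  · exact funext hratio
  · simp

section OddSeries

variable {𝕜 : Type*} [NontriviallyNormedField 𝕜] {E : Type*} [NormedRing E] [NormedAlgebra 𝕜 E]
  [NormOneClass E] {a b : ℕ → 𝕜}

theorem le_radius_ofScalars_of_sq_lt_radius (hodd : ∀ n, a (2 * n + 1) = b n)
    (heven : ∀ n, a (2 * n) = 0) {r : ℝ≥0} (hr : ((r ^ 2 : ℝ≥0) : ℝ≥0∞) < (ofScalars E b).radius) :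
    (r : ℝ≥0∞) ≤ (ofScalars E a).radius := by
  obtain ⟨C, hC, hbound⟩ := (ofScalars E b).norm_mul_pow_le_of_lt_radius hr
  refine le_radius_of_bound _ (r * C) fun n ↦ ?_
  simp only [ofScalars_norm, NNReal.coe_pow] at hbound ⊢
  obtain ⟨k, rfl | rfl⟩ := Nat.even_or_odd' n
  · simp only [heven, norm_zero, zero_mul]
    positivity
  · calc ‖a (2 * k + 1)‖ * (r : ℝ) ^ (2 * k + 1) = r * (‖b k‖ * ((r : ℝ) ^ 2) ^ k) := by
          rw [hodd]; ring
      _ ≤ r * C := by gcongr; exact hbound k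

theorem sq_le_radius_ofScalars_of_lt_radius (hodd : ∀ n, a (2 * n + 1) = b n) {r : ℝ≥0}
    (hr : (r : ℝ≥0∞) < (ofScalars E a).radius) :
    ((r ^ 2 : ℝ≥0) : ℝ≥0∞) ≤ (ofScalars E b).radius := by
  rcases eq_or_ne r 0 with rfl | hr0
  · simp
  obtain ⟨C, -, hbound⟩ := (ofScalars E a).norm_mul_pow_le_of_lt_radius hr
  refine le_radius_of_bound _ (C / r) fun n ↦ ?_
  simp only [ofScalars_norm, NNReal.coe_pow] at hbound ⊢
  rw [le_div_iff₀ (by positivity)]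
  calc ‖b n‖ * ((r : ℝ) ^ 2) ^ n * r = ‖a (2 * n + 1)‖ * (r : ℝ) ^ (2 * n + 1) := by
        rw [hodd]; ring
    _ ≤ C := hbound _

theorem radius_ofScalars_sq_of_odd (hodd : ∀ n, a (2 * n + 1) = b n)
    (heven : ∀ n, a (2 * n) = 0) :
    (ofScalars E a).radius ^ 2 = (ofScalars E b).radius := by
  refine le_antisymm (le_of_forall_nnreal_lt fun r hr ↦ ?_) (le_of_forall_nnreal_lt fun r hr ↦ ?_)
  · have hsqrt : (NNReal.sqrt r : ℝ≥0∞) < (ofScalars E a).radius := by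
      rwa [← ENNReal.pow_lt_pow_left_iff two_ne_zero, ← ENNReal.coe_pow, NNReal.sq_sqrt]
    simpa using sq_le_radius_ofScalars_of_lt_radius hodd hsqrt
  · have hsqrt : (NNReal.sqrt r : ℝ≥0∞) ≤ (ofScalars E a).radius :=
      le_radius_ofScalars_of_sq_lt_radius hodd heven (by rwa [NNReal.sq_sqrt])
    calc (r : ℝ≥0∞) = (NNReal.sqrt r : ℝ≥0∞) ^ 2 := by rw [← ENNReal.coe_pow, NNReal.sq_sqrt]
      _ ≤ (ofScalars E a).radius ^ 2 := by gcongr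

end OddSeries

theorem radius_of_convergence_catalan_series
    (A B : ℝ) (hA : A ≠ 0) (hB : B ≠ 0)
    (a : ℕ → ℝ)
    (hodd : ∀ n : ℕ, a (2 * n + 1) = (catalan n : ℝ) * A ^ (n + 1) * B ^ n)
    (heven : ∀ n : ℕ, a (2 * n) = 0) :
    (FormalMultilinearSeries.ofScalars ℝ a).radius
      = ENNReal.ofReal (1 / (2 * Real.sqrt |A * B|)) := by
  have hsq := radius_ofScalars_sq_of_odd (E := ℝ) (b := fun n ↦ A * catalan n * (A * B) ^ n)
    (fun n ↦ by rw [hodd]; ring) heven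
  rw [radius_ofScalars_mul_catalan_mul_pow ℝ hA (mul_ne_zero hA hB)] at hsq
  refine (ENNReal.pow_right_strictMono two_ne_zero).injective ?_
  rw [hsq, ← ENNReal.ofReal_pow (by positivity), div_pow, mul_pow, Real.sq_sqrt (abs_nonneg _),
    ENNReal.ofReal]
  congr 1
  ext
  rw [Real.coe_toNNReal _ (by positivity)]
  norm_num
end

section
/- Let A, B ∈ ℝ with A ≠ 0, B ≠ 0, and let w ∈ ℝ satisfy |w| < 1/(2√(|A·B|)). Then the series u = Σ_{n≥0} c_n A^{n+1} B^n w^{2n+1} converges absolutely and its sum satisfies u = (A + B·u²)·w. -/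
lemma catalan_le_four_pow (n : ℕ) : (catalan n : ℝ) ≤ 4 ^ n := by
  have h1 : catalan n ≤ Nat.centralBinom n := by
    calc catalan n ≤ (n + 1) * catalan n := Nat.le_mul_of_pos_left _ n.succ_pos
      _ = Nat.centralBinom n := succ_mul_catalan_eq_centralBinom n
  have h2 : Nat.centralBinom n ≤ 4 ^ n := by
    unfold Nat.centralBinom
    calc (2 * n).choose n ≤ ∑ i ∈ Finset.range (2 * n + 1), (2 * n).choose i := by
          apply Finset.single_le_sum (fun i _ => Nat.zero_le _)
          simp; omega
      _ = 4 ^ n := by rw [Nat.sum_range_choose, pow_mul]; norm_num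
  exact_mod_cast h1.trans h2

lemma catalan_gf (x : ℝ) (hx : |x| < 1 / 4) :
    Summable (fun n : ℕ => |(catalan n : ℝ) * x ^ n|) ∧
    (∑' n : ℕ, (catalan n : ℝ) * x ^ n) =
      1 + x * (∑' n : ℕ, (catalan n : ℝ) * x ^ n) ^ 2 := by
  have hgeo : Summable (fun n : ℕ => (4 * |x|) ^ n) :=
    summable_geometric_of_lt_one (by positivity) (by linarith [abs_nonneg x])
  have hsum : Summable (fun n : ℕ => |(catalan n : ℝ) * x ^ n|) := by
    apply Summable.of_nonneg_of_le (fun n => abs_nonneg _) ?_ hgeo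
    intro n
    rw [abs_mul, abs_pow, mul_pow]
    apply mul_le_mul ?_ le_rfl (by positivity) (by positivity)
    rw [abs_of_nonneg (by positivity)]
    exact catalan_le_four_pow n
  refine ⟨hsum, ?_⟩
  have hsum' : Summable (fun n : ℕ => ‖(catalan n : ℝ) * x ^ n‖) := by
    simpa only [Real.norm_eq_abs] using hsum
  set S := ∑' n : ℕ, (catalan n : ℝ) * x ^ n with hS
  have hcauchy : S * S = ∑' n : ℕ, (catalan (n + 1) : ℝ) * x ^ n := by
    rw [hS, tsum_mul_tsum_eq_tsum_sum_antidiagonal_of_summable_norm hsum' hsum']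
    congr 1
    funext n
    rw [catalan_succ' n]
    push_cast
    rw [Finset.sum_mul]
    apply Finset.sum_congr rfl
    intro ij hij
    have := Finset.HasAntidiagonal.mem_antidiagonal.mp hij
    rw [← this, pow_add]
    ring
  have hsum2 : Summable (fun n : ℕ => (catalan n : ℝ) * x ^ n) := hsum'.of_norm
  have hshift : S = 1 + ∑' n : ℕ, (catalan (n + 1) : ℝ) * x ^ (n + 1) := by
    rw [hS, Summable.tsum_eq_zero_add hsum2]
    simp
  have hpull : ∑' n : ℕ, (catalan (n + 1) : ℝ) * x ^ (n + 1) =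
      x * ∑' n : ℕ, (catalan (n + 1) : ℝ) * x ^ n := by
    rw [← tsum_mul_left]
    congr 1; funext n; ring
  show S = 1 + x * S ^ 2
  rw [sq, hcauchy, ← hpull, ← hshift]

theorem catalan_series_converges_and_solves
    (A B w : ℝ) (hA : A ≠ 0) (hB : B ≠ 0)
    (hw : |w| < 1 / (2 * Real.sqrt |A * B|)) :
    Summable (fun n : ℕ => |(catalan n : ℝ) * A ^ (n + 1) * B ^ n * w ^ (2 * n + 1)|) ∧
    (∑' n : ℕ, (catalan n : ℝ) * A ^ (n + 1) * B ^ n * w ^ (2 * n + 1)) =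
      (A + B * (∑' n : ℕ, (catalan n : ℝ) * A ^ (n + 1) * B ^ n * w ^ (2 * n + 1)) ^ 2) * w := by
  set x := A * B * w ^ 2 with hxdef
  have hABpos : (0:ℝ) < |A * B| := abs_pos.mpr (mul_ne_zero hA hB)
  have hsq : Real.sqrt |A * B| > 0 := Real.sqrt_pos.mpr hABpos
  have hx : |x| < 1 / 4 := by
    have h1 : Real.sqrt |A * B| * |w| < 1 / 2 := by
      rw [div_mul_eq_div_div, lt_div_iff₀ hsq] at hw
      linarith [hw]
    have h2 : (Real.sqrt |A * B| * |w|) ^ 2 < (1 / 2) ^ 2 := by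
      apply pow_lt_pow_left₀ h1 (by positivity)
      norm_num
    rw [mul_pow, Real.sq_sqrt hABpos.le] at h2
    calc |x| = |A * B| * |w| ^ 2 := by
          rw [hxdef, abs_mul, abs_pow, sq_abs]
      _ < (1/2)^2 := h2
      _ = 1 / 4 := by norm_num
  obtain ⟨hgfsum, hgf⟩ := catalan_gf x hx
  have hterm : ∀ n : ℕ, (catalan n : ℝ) * A ^ (n + 1) * B ^ n * w ^ (2 * n + 1) =
      A * w * ((catalan n : ℝ) * x ^ n) := by
    intro n
    rw [hxdef, mul_pow, mul_pow, ← pow_mul]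
    ring
  constructor
  · apply Summable.of_nonneg_of_le (fun n => abs_nonneg _) (fun n => ?_)
      (hgfsum.mul_left (|A * w|))
    rw [hterm n, abs_mul]
  · have hrw : (∑' n : ℕ, (catalan n : ℝ) * A ^ (n + 1) * B ^ n * w ^ (2 * n + 1)) =
        A * w * ∑' n : ℕ, (catalan n : ℝ) * x ^ n := by
      rw [← tsum_mul_left]
      exact tsum_congr hterm
    rw [hrw]
    set S := ∑' n : ℕ, (catalan n : ℝ) * x ^ n
    conv_lhs => rw [hgf]
    rw [hxdef]
    ring
end

section
/- If the formal power series u(w) over ℝ has zero constant term and satisfies u = (A + B·u²)·w with A ≠ 0, then u is uniquely determined: its coefficient of w^{2n+1} is c_n A^{n+1} B^n and its even-degree coefficients vanish. -/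
/-!
With `c` the Catalan generating function, `c = 1 + X c²`, the series `a X c(a b X²)` solves
`u = (a + b u²) X`, and its coefficients are read off directly. The solution is unique: the
difference `d` of two solutions `u, v` satisfies `d (1 - b (u + v) X) = 0`, and the second
factor is a unit since its constant coefficient is `1`.
-/

namespace PowerSeries

variable {R : Type*} [CommRing R]

theorem eq_of_eq_C_add_C_mul_sq_mul_X {a b : R} {u v : R⟦X⟧}
    (hu : u = (C a + C b * u ^ 2) * X) (hv : v = (C a + C b * v ^ 2) * X) : u = v := by
  have hunit : IsUnit (1 - C b * (u + v) * X) := by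
    simp [isUnit_iff_constantCoeff]
  have hprod : (u - v) * (1 - C b * (u + v) * X) = 0 := by
    linear_combination hu - hv
  exact sub_eq_zero.mp (hunit.mul_left_eq_zero.mp hprod)

theorem rescale_map_catalanSeries_eq (r : R) :
    rescale r (map (Nat.castRingHom R) catalanSeries) =
      1 + C r * X * rescale r (map (Nat.castRingHom R) catalanSeries) ^ 2 := by
  conv_lhs => rw [← catalanSeries_sq_mul_X_add_one]
  simp only [map_add, map_mul, map_pow, map_one, map_X, rescale_X]
  ring

noncomputable def catalanSolution (a b : R) : R⟦X⟧ :=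
  C a * X * expand 2 two_ne_zero (rescale (a * b) (map (Nat.castRingHom R) catalanSeries))

theorem catalanSolution_eq (a b : R) :
    catalanSolution a b = (C a + C b * catalanSolution a b ^ 2) * X := by
  have hc := congrArg (expand 2 two_ne_zero) (rescale_map_catalanSeries_eq (a * b))
  simp only [map_add, map_mul, map_pow, map_one, expand_C, expand_X] at hc
  unfold catalanSolution
  conv_lhs => rw [hc]
  ring

theorem coeff_catalanSolution_odd (a b : R) (n : ℕ) :
    coeff (2 * n + 1) (catalanSolution a b) = catalan n * a ^ (n + 1) * b ^ n := by
  rw [catalanSolution, mul_assoc, coeff_C_mul, mul_comm X, coeff_succ_mul_X, coeff_expand_mul,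
    coeff_rescale, coeff_map, catalanSeries_coeff]
  simp only [eq_natCast]
  ring

theorem coeff_catalanSolution_even (a b : R) (n : ℕ) :
    coeff (2 * n) (catalanSolution a b) = 0 := by
  rcases n with _ | n
  · simp [catalanSolution]
  rw [catalanSolution, mul_assoc, coeff_C_mul, mul_comm X,
    show 2 * (n + 1) = 2 * n + 1 + 1 by ring,
    coeff_succ_mul_X, coeff_expand_of_not_dvd _ _ _ (by omega), mul_zero]

end PowerSeries

theorem formal_solution_unique_general
    (A B : ℝ) (u : PowerSeries ℝ)
    (heq : u = (PowerSeries.C A + PowerSeries.C B * u ^ 2) * PowerSeries.X) :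
    (∀ n : ℕ, PowerSeries.coeff (2 * n + 1) u =
      (catalan n : ℝ) * A ^ (n + 1) * B ^ n) ∧
    (∀ n : ℕ, PowerSeries.coeff (2 * n) u = 0) := by
  obtain rfl := PowerSeries.eq_of_eq_C_add_C_mul_sq_mul_X heq (PowerSeries.catalanSolution_eq A B)
  exact ⟨PowerSeries.coeff_catalanSolution_odd A B, PowerSeries.coeff_catalanSolution_even A B⟩

theorem formal_solution_unique
    (A B : ℝ) (hA : A ≠ 0) (u : PowerSeries ℝ)
    (h0 : PowerSeries.coeff 0 u = 0)
    (heq : u = (PowerSeries.C A + PowerSeries.C B * u ^ 2) * PowerSeries.X) :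
    (∀ n : ℕ, PowerSeries.coeff (2 * n + 1) u =
      (catalan n : ℝ) * A ^ (n + 1) * B ^ n) ∧
    (∀ n : ℕ, PowerSeries.coeff (2 * n) u = 0) :=
  formal_solution_unique_general A B u heq
end
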